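/- arXiv:2109.01521 — 5 statements merged into one kernel-verified Lean document; each statement's English description precedes it below -/
import Mathlib

section
/- Let K be a compact topological space and f, g : K → ℝ continuous functions with f ≥ 0 on K and such that for every y ∈ K, f(y) = 0 implies g(y) > 0. Then there exist μ > 0 and C > 0 such that μ·f(y) + g(y) ≥ C for all y ∈ K. -/
theorem stmt_1 {K : Type*} [TopologicalSpace K] [CompactSpace K] [Nonempty K]
    (f g : K → ℝ) (hf : Continuous f) (hg : Continuous g)
    (hf0 : ∀ y, 0 ≤ f y) (h : ∀ y, f y = 0 → 0 < g y) :
    ∃ μ > (0 : ℝ), ∃ C > (0 : ℝ), ∀ y, C ≤ μ * f y + g y := by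
  obtain ⟨x0, -, hx0⟩ := isCompact_univ.exists_isMinOn Set.univ_nonempty hg.continuousOn
  have hbmin : ∀ y, g x0 ≤ g y := fun y => hx0 (Set.mem_univ y)
  set b := g x0 with hb
  by_cases hb0 : 0 < b
  · exact ⟨1, one_pos, b, hb0, fun y => by nlinarith [hf0 y, hbmin y]⟩
  push_neg at hb0
  have hT : IsCompact {y | g y ≤ 0} := (isClosed_le hg continuous_const).isCompact
  obtain ⟨z, hz, hzmin⟩ := hT.exists_isMinOn ⟨x0, hb0⟩ hf.continuousOn
  set m := f z with hm
  have hm0 : 0 < m := lt_of_le_of_ne (hf0 z) fun h' =>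
    absurd hz (not_le.mpr (h z h'.symm))
  have key : ∀ y, f y ≤ m / 2 → 0 < g y := by
    intro y hy
    by_contra hgy
    push_neg at hgy
    have := hzmin (show y ∈ {y | g y ≤ 0} from hgy)
    simp only [Set.mem_setOf_eq] at this
    linarith
  have hμ : (0:ℝ) < 2 * (1 - b) / m := div_pos (by linarith) hm0
  have hA : IsCompact {y | f y ≤ m / 2} := (isClosed_le hf continuous_const).isCompact
  by_cases hAne : {y | f y ≤ m / 2}.Nonempty
  · obtain ⟨w, hw, hwmin⟩ := hA.exists_isMinOn hAne hg.continuousOn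
    have hgw : 0 < g w := key w hw
    refine ⟨2 * (1 - b) / m, hμ, min (g w) 1, lt_min hgw one_pos, fun y => ?_⟩
    by_cases hy : f y ≤ m / 2
    · have := hwmin (show y ∈ {y | f y ≤ m / 2} from hy)
      have hfy := hf0 y
      have : min (g w) 1 ≤ g y := le_trans (min_le_left _ _) this
      nlinarith
    · push_neg at hy
      have h2 : 2 * (1 - b) / m * (m / 2) = 1 - b := by field_simp
      have := hbmin y
      have hmin : min (g w) 1 ≤ 1 := min_le_right _ _
      nlinarith [mul_le_mul_of_nonneg_left hy.le hμ.le]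
  · refine ⟨2 * (1 - b) / m, hμ, 1, one_pos, fun y => ?_⟩
    have hy : m / 2 < f y := by
      by_contra hy
      exact hAne ⟨y, not_lt.mp hy⟩
    have := hbmin y
    have h2 : 2 * (1 - b) / m * (m / 2) = 1 - b := by field_simp
    nlinarith [mul_le_mul_of_nonneg_left hy.le hμ.le]
end

section
/- Let r ∈ ℝ with r ≠ 0. With b̃₁(z) = −z² − 2r² and b̃₂(z) = iz³, the determinant det [[b̃₁(ir), b̃₂(ir)],[∂_z b̃₁(ir), ∂_z b̃₂(ir)]] equals 5i·r⁴ and is nonzero. -/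
theorem stmt_4 (r : ℝ) (hr : r ≠ 0)
    (b₁ b₂ : ℂ → ℂ) (hb₁ : ∀ z, b₁ z = -z ^ 2 - 2 * (r : ℂ) ^ 2)
    (hb₂ : ∀ z, b₂ z = Complex.I * z ^ 3) :
    Matrix.det !![b₁ (Complex.I * (r : ℂ)), b₂ (Complex.I * (r : ℂ));
        deriv b₁ (Complex.I * (r : ℂ)), deriv b₂ (Complex.I * (r : ℂ))]
      = 5 * Complex.I * (r : ℂ) ^ 4 ∧
    Matrix.det !![b₁ (Complex.I * (r : ℂ)), b₂ (Complex.I * (r : ℂ));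
        deriv b₁ (Complex.I * (r : ℂ)), deriv b₂ (Complex.I * (r : ℂ))] ≠ 0 := by
  have hb₁' : b₁ = fun z => -z ^ 2 - 2 * (r : ℂ) ^ 2 := funext hb₁
  have hb₂' : b₂ = fun z => Complex.I * z ^ 3 := funext hb₂
  subst hb₁' hb₂'
  have hd1 : deriv (fun z : ℂ => -z ^ 2 - 2 * (r : ℂ) ^ 2) (Complex.I * r)
      = -(2 * (Complex.I * r)) := by
    have : HasDerivAt (fun z : ℂ => -z ^ 2 - 2 * (r : ℂ) ^ 2)
        (-(2 * (Complex.I * r) ^ 1) - 0) (Complex.I * r) := by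
      exact (((hasDerivAt_pow 2 _).neg).sub_const _).congr_deriv (by ring)
    simpa using this.deriv
  have hd2 : deriv (fun z : ℂ => Complex.I * z ^ 3) (Complex.I * r)
      = 3 * Complex.I * (Complex.I * r) ^ 2 := by
    have : HasDerivAt (fun z : ℂ => Complex.I * z ^ 3)
        (Complex.I * (3 * (Complex.I * r) ^ 2)) (Complex.I * r) := by
      simpa using (hasDerivAt_pow 3 (Complex.I * (r:ℂ))).const_mul Complex.I
    rw [this.deriv]; ring
  rw [Matrix.det_fin_two_of, hd1, hd2]
  have key : (-(Complex.I * ↑r) ^ 2 - 2 * ↑r ^ 2) * (3 * Complex.I * (Complex.I * ↑r) ^ 2) -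
      Complex.I * (Complex.I * ↑r) ^ 3 * -(2 * (Complex.I * ↑r)) = 5 * Complex.I * (r:ℂ) ^ 4 := by
    linear_combination (-Complex.I * (r:ℂ) ^ 4 * (Complex.I ^ 2 + 5)) * Complex.I_sq
  refine ⟨key, key ▸ ?_⟩
  have : (r:ℂ) ≠ 0 := by exact_mod_cast hr
  simp [Complex.I_ne_zero, this]
end

section
/- Let r > 0 and a ∈ ℂ with a ≠ −2r. With b̃₁(z) = 1 and b̃₂(z) = −z² − iza, one has det [[b̃₁(ir), b̃₂(ir)],[∂_z b̃₁(ir), ∂_z b̃₂(ir)]] = −i(a + 2r) ≠ 0. -/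
open Complex

theorem hasDerivAt_neg_sq_sub_I_mul_mul (a z : ℂ) :
    HasDerivAt (fun w : ℂ => -w ^ 2 - I * w * a) (-(2 * z) - I * a) z := by
  have hsq : HasDerivAt (fun w : ℂ => -w ^ 2) (-(2 * z)) z := by
    simpa using (hasDerivAt_pow 2 z).fun_neg
  have hlin : HasDerivAt (fun w : ℂ => I * w * a) (I * a) z := by
    simpa using ((hasDerivAt_id z).const_mul I).mul_const a
  exact hsq.sub hlin

theorem det_const_one_boundary_symbols (a z : ℂ) :
    Matrix.det !![(1 : ℂ), -z ^ 2 - I * z * a;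
        deriv (fun _ : ℂ => (1 : ℂ)) z, deriv (fun w : ℂ => -w ^ 2 - I * w * a) z]
      = -(2 * z) - I * a := by
  rw [Matrix.det_fin_two_of, deriv_const, (hasDerivAt_neg_sq_sub_I_mul_mul a z).deriv]
  ring

theorem stmt_6_general (r : ℝ) (a : ℂ) (ha : a ≠ -2 * (r : ℂ))
    (b₁ b₂ : ℂ → ℂ) (hb₁ : ∀ z, b₁ z = 1)
    (hb₂ : ∀ z, b₂ z = -z ^ 2 - Complex.I * z * a) :
    Matrix.det !![b₁ (Complex.I * (r : ℂ)), b₂ (Complex.I * (r : ℂ));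
        deriv b₁ (Complex.I * (r : ℂ)), deriv b₂ (Complex.I * (r : ℂ))]
      = -Complex.I * (a + 2 * (r : ℂ)) ∧
    Matrix.det !![b₁ (Complex.I * (r : ℂ)), b₂ (Complex.I * (r : ℂ));
        deriv b₁ (Complex.I * (r : ℂ)), deriv b₂ (Complex.I * (r : ℂ))] ≠ 0 := by
  obtain rfl : b₁ = fun _ => 1 := funext hb₁
  obtain rfl : b₂ = fun z => -z ^ 2 - I * z * a := funext hb₂
  have hdet : Matrix.det !![(1 : ℂ), -(I * r) ^ 2 - I * (I * r) * a;
      deriv (fun _ : ℂ => (1 : ℂ)) (I * r), deriv (fun w : ℂ => -w ^ 2 - I * w * a) (I * r)]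
      = -I * (a + 2 * r) := by
    rw [det_const_one_boundary_symbols]
    ring
  have ha' : a + 2 * r ≠ 0 := fun h => ha (by linear_combination h)
  exact ⟨hdet, hdet ▸ mul_ne_zero (neg_ne_zero.mpr I_ne_zero) ha'⟩

theorem stmt_6 (r : ℝ) (hr : 0 < r) (a : ℂ) (ha : a ≠ -2 * (r : ℂ))
    (b₁ b₂ : ℂ → ℂ) (hb₁ : ∀ z, b₁ z = 1)
    (hb₂ : ∀ z, b₂ z = -z ^ 2 - Complex.I * z * a) :
    Matrix.det !![b₁ (Complex.I * (r : ℂ)), b₂ (Complex.I * (r : ℂ));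
        deriv b₁ (Complex.I * (r : ℂ)), deriv b₂ (Complex.I * (r : ℂ))]
      = -Complex.I * (a + 2 * (r : ℂ)) ∧
    Matrix.det !![b₁ (Complex.I * (r : ℂ)), b₂ (Complex.I * (r : ℂ));
        deriv b₁ (Complex.I * (r : ℂ)), deriv b₂ (Complex.I * (r : ℂ))] ≠ 0 :=
  stmt_6_general r a ha b₁ b₂ hb₁ hb₂
end

section
/- Let σ > 0, τ > 0, φ_d > 0, and α₁, α₂ ∈ ℂ with Re αⱼ ≥ 0, α₁² = w − σ², α₂² = w + σ² for some w ∈ ℂ. Then the roots π_{j,2} = −iτφ_d + iαⱼ, j = 1,2, cannot both be real; i.e., it is impossible that Re α₁ = τφ_d and Re α₂ = τφ_d simultaneously. -/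
theorem stmt_9 (σ τ φd : ℝ) (hσ : 0 < σ) (hτ : 0 < τ) (hφ : 0 < φd)
    (w α₁ α₂ : ℂ) (h₁re : 0 ≤ α₁.re) (h₂re : 0 ≤ α₂.re)
    (h₁ : α₁ ^ 2 = w - (σ : ℂ) ^ 2) (h₂ : α₂ ^ 2 = w + (σ : ℂ) ^ 2) :
    ¬ ((-Complex.I * ((τ * φd : ℝ) : ℂ) + Complex.I * α₁).im = 0 ∧
       (-Complex.I * ((τ * φd : ℝ) : ℂ) + Complex.I * α₂).im = 0) := by
  rintro ⟨ha, hb⟩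
  simp [Complex.add_im, Complex.mul_im, Complex.I_re, Complex.I_im] at ha hb
  have e1r := congrArg Complex.re h₁
  have e1i := congrArg Complex.im h₁
  have e2r := congrArg Complex.re h₂
  have e2i := congrArg Complex.im h₂
  simp [pow_two, Complex.mul_re, Complex.mul_im, Complex.sub_re, Complex.sub_im,
    Complex.add_re, Complex.add_im, Complex.ofReal_re, Complex.ofReal_im] at e1r e1i e2r e2i
  have ht : 0 < τ * φd := mul_pos hτ hφ
  have h1 : α₁.re = τ * φd := by linarith
  have h2 : α₂.re = τ * φd := by linarith
  rw [h1] at e1r e1i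
  rw [h2] at e2r e2i
  have him : 2 * α₁.im = 2 * α₂.im := by
    apply mul_left_cancel₀ ht.ne'
    linarith
  have him' : α₁.im = α₂.im := by linarith
  rw [him'] at e1r
  linarith [mul_pos hσ hσ]
end

section
/- Let b₁, b₂ : ℂ^{d-1} × ℂ → ℂ be polynomials (in all variables), homogeneous of degrees k₁ and k₂ respectively. Suppose at a point (ξ', z₀) the 2×2 matrix [[b₁, b₂],[∂_z b₁, ∂_z b₂]] has nonzero determinant. Then for δ, δ̃ ∈ ℂ, the determinant of [[b₁(ξ', z₀+δ), b₂(ξ', z₀+δ)],[b₁(ξ', z₀+δ̃), b₂(ξ', z₀+δ̃)]] equals (δ̃−δ) times a function that is nonzero for |δ| + |δ̃| sufficiently small; in particular there exist ε > 0 and C > 0 such that |det| ≥ C|δ − δ̃| whenever |δ| + |δ̃| ≤ ε. -/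
/-!
Write `F(a, b) = f a * g b - g a * f b` and `W = f z₀ * g' - g z₀ * f'`. Since `F(a, a) = 0`,
expanding `f b` and `g b` around `a` gives `F(a, b) = (b - a) * (f a * g' - g a * f') + o(b - a)`,
and strict differentiability makes the remainder uniform as `(a, b) → (z₀, z₀)`. As
`f a * g' - g a * f' → W ≠ 0`, we get `‖F(a, b)‖ ≥ ‖W‖ / 2 * ‖a - b‖` near `(z₀, z₀)`.
-/

open Asymptotics Filter Topology Polynomial

section
variable {𝕜 : Type*} [NontriviallyNormedField 𝕜] {f g : 𝕜 → 𝕜} {f' g' z₀ : 𝕜}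

theorem HasStrictDerivAt.isLittleO_cross_sub_wronskian (hf : HasStrictDerivAt f f' z₀)
    (hg : HasStrictDerivAt g g' z₀) :
    (fun p : 𝕜 × 𝕜 => f p.1 * g p.2 - g p.1 * f p.2 - (p.2 - p.1) * (f z₀ * g' - g z₀ * f'))
      =o[𝓝 (z₀, z₀)] fun p => p.1 - p.2 := by
  have hef := hasDerivAtFilter_iff_isLittleO.1 hf
  have heg := hasDerivAtFilter_iff_isLittleO.1 hg
  have hf₁ : Tendsto (fun p : 𝕜 × 𝕜 => f p.1) (𝓝 (z₀, z₀)) (𝓝 (f z₀)) :=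
    hf.hasDerivAt.continuousAt.tendsto.comp continuousAt_fst
  have hg₁ : Tendsto (fun p : 𝕜 × 𝕜 => g p.1) (𝓝 (z₀, z₀)) (𝓝 (g z₀)) :=
    hg.hasDerivAt.continuousAt.tendsto.comp continuousAt_fst
  have hvar : Tendsto (fun p : 𝕜 × 𝕜 => (f p.1 - f z₀) * g' - (g p.1 - g z₀) * f')
      (𝓝 (z₀, z₀)) (𝓝 0) := by
    simpa using ((hf₁.sub_const (f z₀)).mul_const g').sub ((hg₁.sub_const (g z₀)).mul_const f')
  have hmain := (((hg₁.isBigO_one 𝕜).mul_isLittleO hef).sub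
    ((hf₁.isBigO_one 𝕜).mul_isLittleO heg)).sub
    ((isLittleO_one_iff 𝕜 |>.2 hvar).mul_isBigO (isBigO_refl (fun p : 𝕜 × 𝕜 => p.1 - p.2) _))
  simp only [one_mul] at hmain
  refine hmain.congr_left fun p => ?_
  simp only [smul_eq_mul]
  ring

theorem HasStrictDerivAt.eventually_le_norm_cross (hf : HasStrictDerivAt f f' z₀)
    (hg : HasStrictDerivAt g g' z₀) (hW : f z₀ * g' - g z₀ * f' ≠ 0) :
    ∀ᶠ p in 𝓝 (z₀, z₀),
      ‖f z₀ * g' - g z₀ * f'‖ / 2 * ‖p.1 - p.2‖ ≤ ‖f p.1 * g p.2 - g p.1 * f p.2‖ := by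
  filter_upwards [(hf.isLittleO_cross_sub_wronskian hg).bound (half_pos (norm_pos_iff.2 hW))]
    with p hp
  have hlin : ‖(p.2 - p.1) * (f z₀ * g' - g z₀ * f')‖ = ‖f z₀ * g' - g z₀ * f'‖ * ‖p.1 - p.2‖ := by
    rw [norm_mul, norm_sub_rev, mul_comm]
  have htri := norm_sub_norm_le ((p.2 - p.1) * (f z₀ * g' - g z₀ * f'))
    (f p.1 * g p.2 - g p.1 * f p.2)
  rw [norm_sub_rev ((p.2 - p.1) * _)] at htri
  linarith

end

theorem Filter.Eventually.exists_pos_forall_norm_add_le {E : Type*} [SeminormedAddCommGroup E]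
    {x y : E} {P : E × E → Prop} (h : ∀ᶠ p in 𝓝 (x, y), P p) :
    ∃ ε > (0 : ℝ), ∀ δ δ' : E, ‖δ‖ + ‖δ'‖ ≤ ε → P (x + δ, y + δ') := by
  obtain ⟨ε, hε, hP⟩ := Metric.eventually_nhds_iff.1 h
  refine ⟨ε / 2, half_pos hε, fun δ δ' hδ => hP ?_⟩
  rw [Prod.dist_eq, dist_eq_norm, dist_eq_norm, add_sub_cancel_left, add_sub_cancel_left]
  have := norm_nonneg δ
  have := norm_nonneg δ'
  exact max_lt (by linarith) (by linarith)

theorem hasStrictDerivAt_deriv_of_forall_eq_eval {𝕜 : Type*} [NontriviallyNormedField 𝕜]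
    {f : 𝕜 → 𝕜} {p : 𝕜[X]} (hp : ∀ z, f z = p.eval z) (x : 𝕜) :
    HasStrictDerivAt f (deriv f x) x := by
  obtain rfl : f = fun z => p.eval z := funext hp
  rw [Polynomial.deriv]
  exact p.hasStrictDerivAt x

theorem stmt_15_general {d : ℕ} (b₁ b₂ : (Fin d → ℂ) → ℂ → ℂ)
    (hpoly₁ : ∀ ξ : Fin d → ℂ, ∃ p : Polynomial ℂ, ∀ z, b₁ ξ z = p.eval z)
    (hpoly₂ : ∀ ξ : Fin d → ℂ, ∃ p : Polynomial ℂ, ∀ z, b₂ ξ z = p.eval z)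
    (ξ' : Fin d → ℂ) (z₀ : ℂ)
    (hdet : b₁ ξ' z₀ * deriv (b₂ ξ') z₀ - b₂ ξ' z₀ * deriv (b₁ ξ') z₀ ≠ 0) :
    ∃ ε > (0 : ℝ), ∃ C > (0 : ℝ), ∀ δ δ' : ℂ,
      ‖δ‖ + ‖δ'‖ ≤ ε →
      C * ‖δ - δ'‖ ≤
        ‖b₁ ξ' (z₀ + δ) * b₂ ξ' (z₀ + δ') -
          b₂ ξ' (z₀ + δ) * b₁ ξ' (z₀ + δ')‖ := by
  obtain ⟨p, hp⟩ := hpoly₁ ξ'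
  obtain ⟨q, hq⟩ := hpoly₂ ξ'
  have h₁ := hasStrictDerivAt_deriv_of_forall_eq_eval hp z₀
  have h₂ := hasStrictDerivAt_deriv_of_forall_eq_eval hq z₀
  obtain ⟨ε, hε, hbound⟩ := (h₁.eventually_le_norm_cross h₂ hdet).exists_pos_forall_norm_add_le
  refine ⟨ε, hε, _, half_pos (norm_pos_iff.2 hdet), fun δ δ' hδ => ?_⟩
  simpa only [add_sub_add_left_eq_sub] using hbound δ δ' hδ

theorem stmt_15 {d : ℕ} (k₁ k₂ : ℕ) (b₁ b₂ : (Fin d → ℂ) → ℂ → ℂ)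
    (hpoly₁ : ∀ ξ : Fin d → ℂ, ∃ p : Polynomial ℂ, ∀ z, b₁ ξ z = p.eval z)
    (hpoly₂ : ∀ ξ : Fin d → ℂ, ∃ p : Polynomial ℂ, ∀ z, b₂ ξ z = p.eval z)
    (hhom₁ : ∀ (t : ℂ) (ξ : Fin d → ℂ) (z : ℂ), b₁ (t • ξ) (t * z) = t ^ k₁ * b₁ ξ z)
    (hhom₂ : ∀ (t : ℂ) (ξ : Fin d → ℂ) (z : ℂ), b₂ (t • ξ) (t * z) = t ^ k₂ * b₂ ξ z)
    (ξ' : Fin d → ℂ) (z₀ : ℂ)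
    (hdet : b₁ ξ' z₀ * deriv (b₂ ξ') z₀ - b₂ ξ' z₀ * deriv (b₁ ξ') z₀ ≠ 0) :
    ∃ ε > (0 : ℝ), ∃ C > (0 : ℝ), ∀ δ δ' : ℂ,
      ‖δ‖ + ‖δ'‖ ≤ ε →
      C * ‖δ - δ'‖ ≤
        ‖b₁ ξ' (z₀ + δ) * b₂ ξ' (z₀ + δ') -
          b₂ ξ' (z₀ + δ) * b₁ ξ' (z₀ + δ')‖ :=
  stmt_15_general b₁ b₂ hpoly₁ hpoly₂ ξ' z₀ hdet
end
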